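/- For nonnegative integers n, m, x with x ≤ min(n,m) and real θ > 0: (1/(θ+n)^{(m)}) · Σ_{s=0}^{x} (-1)^s · C(n, n-x) · C(x,s) · (θ+x-s)^{(m)} = x! · C(n,x) · C(m,x) · (θ+x)^{(m-x)} / (θ+n)^{(m)}. Equivalently, Σ_{s=0}^{x} (-1)^s · C(x,s) · (θ+x-s)^{(m)} = x! · C(m,x) · (θ+x)^{(m-x)}. -/
import Mathlib


open Finset

/-- Rising factorial `a^{(k)} = a(a+1)⋯(a+k-1)`. -/
noncomputable def rise (a : ℝ) (k : ℕ) : ℝ := ∏ i ∈ Finset.range k, (a + i)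

/-- Falling factorial `a^{[k]} = a(a-1)⋯(a-k+1)`. -/
noncomputable def fall (a : ℝ) (k : ℕ) : ℝ := ∏ i ∈ Finset.range k, (a - i)

lemma rise_succ (a : ℝ) (k : ℕ) : rise a (k+1) = rise a k * (a + k) :=
  Finset.prod_range_succ _ _

lemma rise_succ' (a : ℝ) (k : ℕ) : rise a (k+1) = a * rise (a+1) k := by
  rw [rise, Finset.prod_range_succ']
  simp only [Nat.cast_zero, add_zero]
  rw [mul_comm, rise]
  congr 1
  refine Finset.prod_congr rfl fun i _ => ?_
  push_cast; ring

lemma rise_diff (a : ℝ) (k : ℕ) :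
    rise (a+1) (k+1) - rise a (k+1) = (k+1) * rise (a+1) k := by
  rw [rise_succ (a+1) k, rise_succ' a k]; ring

lemma sum_pascal (f : ℕ → ℝ) (x : ℕ) :
    ∑ s ∈ range (x+2), (-1:ℝ)^s * ((x+1).choose s) * f s
      = ∑ s ∈ range (x+1), (-1:ℝ)^s * (x.choose s) * (f s - f (s+1)) := by
  have hA : ∑ s ∈ range (x+2), (-1:ℝ)^s * (x.choose s) * f s
      = ∑ s ∈ range (x+1), (-1:ℝ)^s * (x.choose s) * f s := by
    rw [Finset.sum_range_succ, Nat.choose_succ_self]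
    simp
  have hB : ∑ s ∈ range (x+2), (-1:ℝ)^s * (x.choose s) * f s
      = (∑ s ∈ range (x+1), (-1:ℝ)^(s+1) * (x.choose (s+1)) * f (s+1)) + f 0 := by
    rw [Finset.sum_range_succ']
    simp
  have hL : ∑ s ∈ range (x+2), (-1:ℝ)^s * ((x+1).choose s) * f s
      = (∑ s ∈ range (x+1), (-1:ℝ)^(s+1) * ((x+1).choose (s+1)) * f (s+1)) + f 0 := by
    rw [Finset.sum_range_succ']
    simp
  rw [hL]
  have hsplit : ∀ s, ((x+1).choose (s+1) : ℝ) = (x.choose s : ℝ) + (x.choose (s+1) : ℝ) := by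
    intro s
    rw [Nat.choose_succ_succ]
    push_cast; ring
  calc (∑ s ∈ range (x+1), (-1:ℝ)^(s+1) * ((x+1).choose (s+1)) * f (s+1)) + f 0
      = (∑ s ∈ range (x+1), ((-1:ℝ)^(s+1) * (x.choose s) * f (s+1)
          + (-1:ℝ)^(s+1) * (x.choose (s+1)) * f (s+1))) + f 0 := by
        congr 1
        refine Finset.sum_congr rfl fun s _ => ?_
        rw [hsplit]; ring
    _ = (∑ s ∈ range (x+1), (-1:ℝ)^(s+1) * (x.choose s) * f (s+1))
          + ((∑ s ∈ range (x+1), (-1:ℝ)^(s+1) * (x.choose (s+1)) * f (s+1)) + f 0) := by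
        rw [Finset.sum_add_distrib]; ring
    _ = (∑ s ∈ range (x+1), (-1:ℝ)^(s+1) * (x.choose s) * f (s+1))
          + ∑ s ∈ range (x+1), (-1:ℝ)^s * (x.choose s) * f s := by
        rw [← hB, hA]
    _ = ∑ s ∈ range (x+1), (-1:ℝ)^s * (x.choose s) * (f s - f (s+1)) := by
        rw [← Finset.sum_add_distrib]
        refine Finset.sum_congr rfl fun s _ => ?_
        ring

lemma key (x : ℕ) : ∀ m : ℕ, ∀ θ : ℝ, x ≤ m →
    ∑ s ∈ range (x+1), (-1:ℝ)^s * (x.choose s) * rise (θ + x - s) m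
      = x.factorial * (m.choose x) * rise (θ + x) (m - x) := by
  induction x with
  | zero => intro m θ _; simp
  | succ x ih =>
    intro m θ hm
    obtain ⟨k, rfl⟩ : ∃ k, m = k + 1 := ⟨m - 1, by omega⟩
    have hxk : x ≤ k := by omega
    have hp := sum_pascal (fun s => rise (θ + (↑(x+1):ℝ) - s) (k+1)) x
    have e1 : ∑ s ∈ range (x+1+1), (-1:ℝ)^s * ((x+1).choose s) * rise (θ + ↑(x+1) - s) (k+1)
        = ∑ s ∈ range (x+1), (-1:ℝ)^s * (x.choose s) *
            (rise (θ + ↑(x+1) - s) (k+1) - rise (θ + ↑(x+1) - (↑s+1)) (k+1)) := by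
      simpa using hp
    rw [e1]
    have e2 : ∀ s ∈ range (x+1),
        (-1:ℝ)^s * (x.choose s) *
            (rise (θ + ↑(x+1) - s) (k+1) - rise (θ + ↑(x+1) - (↑s+1)) (k+1))
        = (↑k+1) * ((-1:ℝ)^s * (x.choose s) * rise ((θ+1) + ↑x - s) k) := by
      intro s _
      have h1 : (θ + (↑(x+1):ℝ) - s) = (θ + ↑x - s) + 1 := by push_cast; ring
      have h2 : (θ + (↑(x+1):ℝ) - (↑s+1)) = θ + ↑x - s := by push_cast; ring
      rw [h1, h2, rise_diff (θ + ↑x - s) k]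
      have h3 : (θ + (↑x:ℝ) - s) + 1 = (θ+1) + ↑x - s := by ring
      rw [h3]; ring
    rw [Finset.sum_congr rfl e2, ← Finset.mul_sum, ih k (θ+1) hxk]
    have harg : (θ+1) + (↑x:ℝ) = θ + ↑(x+1) := by push_cast; ring
    have hnum : (↑k+1 : ℝ) * (x.factorial * (k.choose x))
        = (x+1).factorial * ((k+1).choose (x+1)) := by
      have := Nat.add_one_mul_choose_eq k x
      have hc : ((k+1) * k.choose x : ℕ) = ((k+1).choose (x+1) * (x+1) : ℕ) := this
      have := congrArg (Nat.cast (R := ℝ)) hc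
      push_cast at this ⊢
      rw [Nat.factorial_succ]
      push_cast
      nlinarith [this]
    have hsub : k - x = k + 1 - (x + 1) := by omega
    rw [harg, hsub] at *
    linear_combination rise (θ + ↑(x+1)) (k+1-(x+1)) * hnum

theorem stmt_3 (n m x : ℕ) (hx : x ≤ min n m) (θ : ℝ) (hθ : 0 < θ) :
    (1 / rise (θ + n) m) *
        ∑ s ∈ Finset.range (x + 1),
          (-1 : ℝ) ^ s * (n.choose (n - x) : ℝ) * (x.choose s) * rise (θ + x - s) m
      = (x.factorial : ℝ) * (n.choose x) * (m.choose x) * rise (θ + x) (m - x)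
          / rise (θ + n) m
    ∧ ∑ s ∈ Finset.range (x + 1),
        (-1 : ℝ) ^ s * (x.choose s : ℝ) * rise (θ + x - s) m
      = (x.factorial : ℝ) * (m.choose x) * rise (θ + x) (m - x) := by
  have hxm : x ≤ m := le_trans hx (min_le_right n m)
  have hxn : x ≤ n := le_trans hx (min_le_left n m)
  have h2 := key x m θ hxm
  refine ⟨?_, h2⟩
  have hch : (n.choose (n - x) : ℝ) = (n.choose x : ℝ) := by
    norm_cast
    exact Nat.choose_symm hxn
  have : ∑ s ∈ Finset.range (x + 1),
      (-1 : ℝ) ^ s * (n.choose (n - x) : ℝ) * (x.choose s) * rise (θ + x - s) m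
      = (n.choose x : ℝ) * ∑ s ∈ Finset.range (x + 1),
          (-1 : ℝ) ^ s * (x.choose s : ℝ) * rise (θ + x - s) m := by
    rw [Finset.mul_sum]
    refine Finset.sum_congr rfl fun s _ => ?_
    rw [hch]; ring
  rw [this, h2]
  ring
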